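/- arXiv:1009.4352 — 4 statements merged into one kernel-verified Lean document; each statement's English description precedes it below -/
import Mathlib

section
/- Every integral point of the local codeword polytope satisfies the parity check: if c ∈ {0,1}^N and for every odd-cardinality S ⊆ L it holds that Σ_{i∈S} c_i − Σ_{i∈L∖S} c_i ≤ |S| − 1, then Σ_{i∈L} c_i is even. -/
/-!
For a 0/1 vector `c`, take `S` to be the set of `i ∈ L` with `c i = 1`. Then the left-hand side
of the inequality indexed by `S` equals `|S|`, so that inequality fails and `|S|` cannot be odd;
but `|S| = ∑_{i ∈ L} c i`.
-/

open Finset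

section Binary

variable {ι : Type*} {c : ι → ℤ}

theorem Finset.sum_filter_eq_one_eq_card (s : Finset ι) :
    ∑ i ∈ s with c i = 1, c i = #{i ∈ s | c i = 1} := by
  rw [sum_congr rfl fun i hi => (mem_filter.1 hi).2]
  simp

theorem Finset.sum_sdiff_filter_eq_one_of_binary [DecidableEq ι] (hbin : ∀ i, c i = 0 ∨ c i = 1)
    (s : Finset ι) : ∑ i ∈ s \ {i ∈ s | c i = 1}, c i = 0 := by
  refine sum_eq_zero fun i hi => (hbin i).resolve_right fun h => ?_
  exact (mem_sdiff.1 hi).2 (mem_filter.2 ⟨(mem_sdiff.1 hi).1, h⟩)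

theorem Finset.sum_eq_card_filter_eq_one_of_binary [DecidableEq ι] (hbin : ∀ i, c i = 0 ∨ c i = 1)
    (s : Finset ι) : ∑ i ∈ s, c i = #{i ∈ s | c i = 1} := by
  rw [← sum_sdiff (filter_subset (c · = 1) s), sum_sdiff_filter_eq_one_of_binary hbin,
    sum_filter_eq_one_eq_card, zero_add]

end Binary

theorem LCP_integral_implies_parity (N : ℕ) (L : Finset (Fin N)) (c : Fin N → ℤ)
    (hbin : ∀ i, c i = 0 ∨ c i = 1)
    (hineq : ∀ S ⊆ L, Odd S.card →
      ∑ i ∈ S, c i - ∑ i ∈ L \ S, c i ≤ (S.card : ℤ) - 1) :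
    Even (∑ i ∈ L, c i) := by
  rw [sum_eq_card_filter_eq_one_of_binary hbin, Int.even_coe_nat, ← Nat.not_odd_iff_even]
  intro hodd
  have hviolated := hineq _ (filter_subset _ L) hodd
  rw [sum_filter_eq_one_eq_card, sum_sdiff_filter_eq_one_of_binary hbin] at hviolated
  omega
end

section
/- The local codeword polytope LCP(L) is the convex hull of the binary vectors in {0,1}^N whose restriction to L has even weight, where coordinates outside L range freely in [0,1]. -/
/-!
By Hahn–Banach it suffices that every linear functional `w` attains its maximum over the
polytope at an even-parity vertex. The maximizer `g` of `w` over the cube (`g i = 1` iff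
`0 < w i`) satisfies `w ⬝ᵥ g - w ⬝ᵥ c = ∑ i, |w i| * |g i - c i|`. If `g` has odd weight on `L`,
flip its coordinate `m ∈ L` of smallest `|w m|`; this costs `|w m|`, and the odd-set inequality
for `S = {i ∈ L | 0 < w i}` says precisely that `∑ i ∈ L, |g i - c i| ≥ 1`, so the gap above
is at least `|w m|`.
-/

open Finset Set

variable {ι : Type*}

def localCodewordPolytope [DecidableEq ι] (L : Finset ι) : Set (ι → ℝ) :=
  {c | (∀ i, c i ∈ Icc (0 : ℝ) 1) ∧
    ∀ S ⊆ L, Odd S.card → ∑ i ∈ S, c i - ∑ i ∈ L \ S, c i ≤ (S.card : ℝ) - 1}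

def evenParitySet (L : Finset ι) : Set (ι → ℝ) :=
  {c | (∀ i, c i = 0 ∨ c i = 1) ∧ ∃ k : ℕ, ∑ i ∈ L, c i = 2 * k}

lemma sum_eq_card_filter_eq_one {v : ι → ℝ} (hv : ∀ i, v i = 0 ∨ v i = 1) (s : Finset ι) :
    ∑ i ∈ s, v i = #{i ∈ s | v i = 1} := by
  rw [← sum_boole]
  refine sum_congr rfl fun i _ => ?_
  rcases hv i with h | h <;> simp [h]

lemma evenParitySet_subset_localCodewordPolytope [DecidableEq ι] (L : Finset ι) :
    evenParitySet L ⊆ localCodewordPolytope L := by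
  rintro v ⟨hv, k, hk⟩
  refine ⟨fun i => by rcases hv i with h | h <;> simp [h], fun S hS hodd => ?_⟩
  have hsum := sum_sdiff hS (f := v)
  rw [hk, sum_eq_card_filter_eq_one hv (L \ S), sum_eq_card_filter_eq_one hv S] at hsum
  rw [sum_eq_card_filter_eq_one hv S, sum_eq_card_filter_eq_one hv (L \ S)]
  have hparity : #{i ∈ S | v i = 1} + 1 ≤ #S + #{i ∈ L \ S | v i = 1} := by
    have hcard : #{i ∈ L \ S | v i = 1} + #{i ∈ S | v i = 1} = 2 * k := by
      exact_mod_cast hsum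
    have := card_filter_le S (v · = 1)
    obtain ⟨m, hm⟩ := hodd
    omega
  have : (#{i ∈ S | v i = 1} + 1 : ℝ) ≤ #S + #{i ∈ L \ S | v i = 1} := by
    exact_mod_cast hparity
  linarith

lemma convex_localCodewordPolytope [DecidableEq ι] (L : Finset ι) :
    Convex ℝ (localCodewordPolytope L) := by
  rintro x ⟨hx01, hx⟩ y ⟨hy01, hy⟩ a b ha hb hab
  refine ⟨fun i => convex_Icc 0 1 (hx01 i) (hy01 i) ha hb hab, fun S hS hodd => ?_⟩
  have hsum (T : Finset ι) :
      ∑ i ∈ T, (a • x + b • y) i = a * ∑ i ∈ T, x i + b * ∑ i ∈ T, y i := by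
    simp only [Pi.add_apply, Pi.smul_apply, smul_eq_mul, sum_add_distrib, mul_sum]
  rw [hsum, hsum]
  nlinarith [mul_le_mul_of_nonneg_left (hx S hS hodd) ha,
    mul_le_mul_of_nonneg_left (hy S hS hodd) hb]

lemma finite_evenParitySet [Finite ι] (L : Finset ι) : (evenParitySet L).Finite :=
  (Set.Finite.pi' fun _ => ({0, 1} : Set ℝ).toFinite).subset fun _ hv i => hv.1 i

lemma one_le_sum_abs_sub_of_mem_localCodewordPolytope [DecidableEq ι] {L : Finset ι}
    {c : ι → ℝ} (hc : c ∈ localCodewordPolytope L) (p : ι → Prop) [DecidablePred p]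
    (hodd : Odd #{i ∈ L | p i}) :
    1 ≤ ∑ i ∈ L, |(if p i then 1 else 0) - c i| := by
  rw [← sum_filter_add_sum_filter_not L p, filter_not]
  have h₁ : ∑ i ∈ L with p i, |(if p i then 1 else 0) - c i| = ∑ i ∈ L with p i, (1 - c i) :=
    sum_congr rfl fun i hi => by
      rw [if_pos (mem_filter.mp hi).2, abs_of_nonneg (sub_nonneg.mpr (hc.1 i).2)]
  have h₂ : ∑ i ∈ L \ {i ∈ L | p i}, |(if p i then 1 else 0) - c i| =
      ∑ i ∈ L \ {i ∈ L | p i}, c i :=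
    sum_congr rfl fun i hi => by
      rw [if_neg fun h => (mem_sdiff.mp hi).2 (mem_filter.mpr ⟨(mem_sdiff.mp hi).1, h⟩),
        zero_sub, abs_neg, abs_of_nonneg (hc.1 i).1]
  have := hc.2 _ (filter_subset p L) hodd
  rw [h₁, h₂, sum_sub_distrib, sum_const, nsmul_one]
  linarith

lemma dotProduct_sub_eq_sum_abs_mul_abs [Fintype ι] (w : ι → ℝ) {c : ι → ℝ}
    (hc : ∀ i, c i ∈ Icc (0 : ℝ) 1) :
    w ⬝ᵥ (fun i => if 0 < w i then 1 else 0) - w ⬝ᵥ c =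
      ∑ i, |w i| * |(if 0 < w i then 1 else 0) - c i| := by
  rw [dotProduct, dotProduct, ← sum_sub_distrib]
  refine sum_congr rfl fun i _ => ?_
  obtain ⟨hc0, hc1⟩ := hc i
  by_cases hw : 0 < w i
  · simp [hw, abs_of_pos hw, abs_of_nonneg (sub_nonneg.mpr hc1), mul_sub]
  · simp [hw, abs_of_nonpos (not_lt.mp hw), abs_of_nonneg hc0]

theorem exists_mem_evenParitySet_dotProduct_le [Fintype ι] [DecidableEq ι] {L : Finset ι}
    {c : ι → ℝ} (hc : c ∈ localCodewordPolytope L) (w : ι → ℝ) :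
    ∃ v ∈ evenParitySet L, w ⬝ᵥ c ≤ w ⬝ᵥ v := by
  set g : ι → ℝ := fun i => if 0 < w i then 1 else 0
  have hg01 (i : ι) : g i = 0 ∨ g i = 1 := by by_cases h : 0 < w i <;> simp [g, h]
  have hgL : ∑ i ∈ L, g i = #{i ∈ L | 0 < w i} := sum_boole _ _
  have hgap := dotProduct_sub_eq_sum_abs_mul_abs w hc.1
  rcases Nat.even_or_odd #{i ∈ L | 0 < w i} with ⟨k, hk⟩ | hodd
  · refine ⟨g, ⟨hg01, k, by rw [hgL, hk]; push_cast; ring⟩, ?_⟩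
    have : 0 ≤ ∑ i, |w i| * |g i - c i| := by positivity
    linarith
  obtain ⟨m, hmL, hm⟩ := L.exists_min_image (fun i => |w i|)
    (card_pos.mp (hodd.pos.trans_le (card_filter_le _ _)))
  refine ⟨g + Pi.single m (1 - 2 * g m), ⟨fun i => ?_, ?_⟩, ?_⟩
  · rcases eq_or_ne i m with rfl | hi
    · rcases hg01 i with h | h <;> norm_num [h]
    · simpa [hi] using hg01 i
  · obtain ⟨k, hk⟩ := hodd
    simp only [Pi.add_apply]
    rw [sum_add_distrib, sum_pi_single', if_pos hmL, hgL, hk]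
    rcases hg01 m with h | h
    · exact ⟨k + 1, by rw [h]; push_cast; ring⟩
    · exact ⟨k, by rw [h]; push_cast; ring⟩
  · have hflip : w ⬝ᵥ (g + Pi.single m (1 - 2 * g m)) = w ⬝ᵥ g - |w m| := by
      rw [dotProduct_add, dotProduct_single]
      by_cases hw : 0 < w m
      · rw [show g m = 1 from if_pos hw, abs_of_pos hw]; ring
      · rw [show g m = 0 from if_neg hw, abs_of_nonpos (not_lt.mp hw)]; ring
    have hdist := one_le_sum_abs_sub_of_mem_localCodewordPolytope hc (0 < w ·) hodd
    calc w ⬝ᵥ c = w ⬝ᵥ g - ∑ i, |w i| * |g i - c i| := by linarith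
      _ ≤ w ⬝ᵥ g - ∑ i ∈ L, |w i| * |g i - c i| :=
        sub_le_sub_left (sum_le_sum_of_subset_of_nonneg (subset_univ L)
          fun i _ _ => by positivity) _
      _ ≤ w ⬝ᵥ g - ∑ i ∈ L, |w m| * |g i - c i| :=
        sub_le_sub_left (sum_le_sum fun i hi =>
          mul_le_mul_of_nonneg_right (hm i hi) (abs_nonneg _)) _
      _ ≤ w ⬝ᵥ g - |w m| := by
        rw [← mul_sum]
        exact sub_le_sub_left (le_mul_of_one_le_right (abs_nonneg _) hdist) _
      _ = _ := hflip.symm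

theorem localCodewordPolytope_subset_convexHull [Fintype ι] [DecidableEq ι] (L : Finset ι) :
    localCodewordPolytope L ⊆ convexHull ℝ (evenParitySet L) := by
  intro c hc
  by_contra hnot
  obtain ⟨f, u, hfV, hfc⟩ := geometric_hahn_banach_closed_point (convex_convexHull ℝ _)
    ((finite_evenParitySet L).isClosed_convexHull (𝕜 := ℝ)) hnot
  set w := (dotProductEquiv ℝ ι).symm f.toLinearMap
  have hf (x : ι → ℝ) : f x = w ⬝ᵥ x :=
    (LinearMap.congr_fun ((dotProductEquiv ℝ ι).apply_symm_apply f.toLinearMap) x).symm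
  obtain ⟨v, hv, hle⟩ := exists_mem_evenParitySet_dotProduct_le hc w
  have := hfV v (subset_convexHull ℝ _ hv)
  rw [hf] at this hfc
  linarith

theorem LCP_eq_convexHull (N : ℕ) (L : Finset (Fin N)) :
    convexHull ℝ
      {c : Fin N → ℝ | (∀ i, c i = 0 ∨ c i = 1) ∧
        ∃ k : ℕ, ∑ i ∈ L, c i = 2 * k}
    = {c : Fin N → ℝ | (∀ i, c i ∈ Set.Icc (0 : ℝ) 1) ∧
        ∀ S ⊆ L, Odd S.card →
          ∑ i ∈ S, c i - ∑ i ∈ L \ S, c i ≤ (S.card : ℝ) - 1} :=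
  (convexHull_min (evenParitySet_subset_localCodewordPolytope L)
    (convex_localCodewordPolytope L)).antisymm (localCodewordPolytope_subset_convexHull L)
end

section
/- The tanh-product check rule: for m_1,...,m_n ∈ ℝ and K > 0, the ratio (Σ_{|B| even, j∉B} e^{-K Σ_{i∈B} m_i}) / (Σ_{|B| even, j∈B} e^{-K Σ_{i∈B} m_i}) equals (1 + l_j)/(1 − l_j)·e^{K m_j}, where l_j = ∏_{i≠j} tanh(K m_i / 2) — equivalently, the difference of soft-mins restricted to even subsets containing/excluding index j equals (1/K)·ln((1−l_j)/(1+l_j)) + m_j, provided |l_j| < 1. -/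
/-!
Put `x i = exp (-K m i)`. Then `exp (-K ∑_{i ∈ B} m i) = ∏_{i ∈ B} x i`, the numerator is the even part
`E` and the denominator `x j` times the odd part `O` of the expansion of `∏_{i ≠ j} (1 + x i)`, so
`2E = P₊ + P₋` and `2O = P₊ - P₋` with `P± = ∏_{i ≠ j} (1 ± x i)`. Since
`tanh (K m i / 2) = (1 - x i) / (1 + x i)`, we have `l = P₋ / P₊`, and `E / O = (1 + l) / (1 - l)`.
-/

open Finset

namespace Finset

variable {ι : Type*}

theorem prod_one_sub_eq_sum_powerset {R : Type*} [CommRing R] (s : Finset ι) (f : ι → R) :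
    ∏ i ∈ s, (1 - f i) = ∑ t ∈ s.powerset, (-1) ^ #t * ∏ i ∈ t, f i := by
  simp only [sub_eq_add_neg, prod_one_add, prod_neg]

section Parity

variable {R : Type*} [CommRing R] (s : Finset ι) (f : ι → R)

theorem two_mul_sum_powerset_even_prod :
    2 * ∑ t ∈ s.powerset with Even #t, ∏ i ∈ t, f i
      = ∏ i ∈ s, (1 + f i) + ∏ i ∈ s, (1 - f i) := by
  rw [prod_one_add, prod_one_sub_eq_sum_powerset, ← sum_add_distrib, sum_filter, mul_sum]
  refine sum_congr rfl fun t _ => ?_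
  rcases Nat.even_or_odd #t with h | h
  · rw [if_pos h, h.neg_one_pow]; ring
  · rw [if_neg (Nat.not_even_iff_odd.mpr h), h.neg_one_pow]; ring

theorem two_mul_sum_powerset_odd_prod :
    2 * ∑ t ∈ s.powerset with Odd #t, ∏ i ∈ t, f i
      = ∏ i ∈ s, (1 + f i) - ∏ i ∈ s, (1 - f i) := by
  rw [prod_one_add, prod_one_sub_eq_sum_powerset, ← sum_sub_distrib, sum_filter, mul_sum]
  refine sum_congr rfl fun t _ => ?_
  rcases Nat.even_or_odd #t with h | h
  · rw [if_neg (Nat.not_odd_iff_even.mpr h), h.neg_one_pow]; ring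
  · rw [if_pos h, h.neg_one_pow]; ring

end Parity

theorem sum_powerset_even_div_sum_powerset_odd {K : Type*} [Field K] [CharZero K]
    (s : Finset ι) (f : ι → K) (hf : ∀ i ∈ s, 1 + f i ≠ 0) :
    (∑ t ∈ s.powerset with Even #t, ∏ i ∈ t, f i) / (∑ t ∈ s.powerset with Odd #t, ∏ i ∈ t, f i)
      = (1 + ∏ i ∈ s, (1 - f i) / (1 + f i)) / (1 - ∏ i ∈ s, (1 - f i) / (1 + f i)) := by
  have hplus : ∏ i ∈ s, (1 + f i) ≠ 0 := prod_ne_zero_iff.mpr hf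
  rw [prod_div_distrib, ← mul_div_mul_left (1 + _) (1 - _) hplus, mul_add, mul_sub, mul_one,
    mul_div_cancel₀ _ hplus, ← two_mul_sum_powerset_even_prod, ← two_mul_sum_powerset_odd_prod,
    mul_div_mul_left _ _ two_ne_zero]

variable [DecidableEq ι]

theorem powerset_filter_even_and_notMem (s : Finset ι) (a : ι) :
    {B ∈ s.powerset | Even #B ∧ a ∉ B} = {B ∈ (s.erase a).powerset | Even #B} := by
  ext B
  simp only [mem_filter, mem_powerset, subset_erase]
  tauto

theorem sum_powerset_filter_even_and_mem_prod {R : Type*} [CommSemiring R] {s : Finset ι} {a : ι}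
    (ha : a ∈ s) (f : ι → R) :
    ∑ B ∈ s.powerset with Even #B ∧ a ∈ B, ∏ i ∈ B, f i
      = f a * ∑ A ∈ (s.erase a).powerset with Odd #A, ∏ i ∈ A, f i := by
  rw [mul_sum]
  refine sum_nbij' (fun B => B.erase a) (insert a) ?_ ?_ ?_ ?_ ?_
  · intro B hB
    simp only [mem_filter, mem_powerset] at hB ⊢
    obtain ⟨hBs, hBeven, haB⟩ := hB
    refine ⟨erase_subset_erase a hBs, ?_⟩
    rw [card_erase_of_mem haB]
    exact Nat.Even.sub_odd (card_pos.mpr ⟨a, haB⟩) hBeven odd_one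
  · intro A hA
    simp only [mem_filter, mem_powerset, subset_erase] at hA ⊢
    obtain ⟨⟨hAs, haA⟩, hAodd⟩ := hA
    refine ⟨insert_subset ha hAs, ?_, mem_insert_self a A⟩
    rw [card_insert_of_notMem haA]
    exact hAodd.add_one
  · intro B hB
    exact insert_erase (mem_filter.mp hB).2.2
  · intro A hA
    exact erase_insert (subset_erase.mp (mem_powerset.mp (mem_filter.mp hA).1)).2
  · intro B hB
    exact (mul_prod_erase B f (mem_filter.mp hB).2.2).symm

end Finset

theorem Real.tanh_div_two (t : ℝ) :
    Real.tanh (t / 2) = (1 - Real.exp (-t)) / (1 + Real.exp (-t)) := by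
  rw [Real.tanh_eq, ← mul_div_mul_right _ _ (Real.exp_pos (-(t / 2))).ne', sub_mul, add_mul,
    ← Real.exp_add, ← Real.exp_add, add_neg_cancel, ← two_mul, Real.exp_zero]
  ring_nf

theorem tanh_product_check_rule_general (n : ℕ) (K : ℝ)
    (m : Fin n → ℝ) (j : Fin n)
    (l : ℝ) (hl : l = ∏ i ∈ Finset.univ.erase j, Real.tanh (K * m i / 2)) :
    (∑ B ∈ Finset.univ.powerset.filter
          (fun B : Finset (Fin n) => Even B.card ∧ j ∉ B),
        Real.exp (-K * ∑ i ∈ B, m i))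
      / (∑ B ∈ Finset.univ.powerset.filter
          (fun B : Finset (Fin n) => Even B.card ∧ j ∈ B),
        Real.exp (-K * ∑ i ∈ B, m i))
    = (1 + l) / (1 - l) * Real.exp (K * m j) := by
  set x : Fin n → ℝ := fun i => Real.exp (-K * m i)
  have hexp (B : Finset (Fin n)) : Real.exp (-K * ∑ i ∈ B, m i) = ∏ i ∈ B, x i := by
    rw [mul_sum, Real.exp_sum]
  have htanh (i : Fin n) : Real.tanh (K * m i / 2) = (1 - x i) / (1 + x i) := by
    rw [Real.tanh_div_two, ← neg_mul]
  simp only [hexp]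
  rw [powerset_filter_even_and_notMem, sum_powerset_filter_even_and_mem_prod (mem_univ j),
    div_mul_eq_div_div_swap, sum_powerset_even_div_sum_powerset_odd _ _
      fun i _ => (add_pos one_pos (Real.exp_pos _)).ne',
    hl, prod_congr rfl fun i _ => htanh i, div_eq_mul_inv, ← Real.exp_neg, neg_mul, neg_neg]

theorem tanh_product_check_rule (n : ℕ) (hn : 2 ≤ n) (K : ℝ) (hK : 0 < K)
    (m : Fin n → ℝ) (j : Fin n)
    (l : ℝ) (hl : l = ∏ i ∈ Finset.univ.erase j, Real.tanh (K * m i / 2))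
    (hl1 : |l| < 1) :
    (∑ B ∈ Finset.univ.powerset.filter
          (fun B : Finset (Fin n) => Even B.card ∧ j ∉ B),
        Real.exp (-K * ∑ i ∈ B, m i))
      / (∑ B ∈ Finset.univ.powerset.filter
          (fun B : Finset (Fin n) => Even B.card ∧ j ∈ B),
        Real.exp (-K * ∑ i ∈ B, m i))
    = (1 + l) / (1 - l) * Real.exp (K * m j) :=
  tanh_product_check_rule_general n K m j l hl
end

section
/- Strong duality for the joint decoding LP: the minimum of Σ_i Σ_{e∈T_i} b_{i,e}·g_{i,e} over the (nonempty, compact) primal feasible polytope of Problem-P equals the maximum over dual variables (m, n) of Σ_j min_{B∈E_j} Σ_{i∈B} m_{i,j} + min_{e∈T_p} [Γ_{p,e} − n_{p−1,s(e)} + n_{p,s'(e)}], subject to Γ_{i,e} ≥ n_{i−1,s(e)} − n_{i,s'(e)} for all i ≠ p and n_{0,k} = n_{N,k} = 0, where Γ_{i,e} = b_{i,e} − 1[x(e)=1]·Σ_{j∈N(i)} m_{i,j}. -/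
/-!
Problem-P is a linear program `min c z` subject to `z ≥ 0`, `A z = β`, so LP strong duality
applies. It follows from Farkas' lemma: `(-1, 0)` is separated from the cone
`{(c x - t P, A x - t β) | x, t ≥ 0}`, which is closed because, by a Carathéodory argument, it is a
finite union of images of orthant faces under linear maps that are injective on their spans.

The LP dual is identified with Problem-D1 through one Lagrangian identity: for all `(g, w)` and
all `(m, n)` with `n` vanishing at the first and last trellis nodes, the cost `∑ b g` equals
`∑ g (Γ - n + n) + ∑_j ∑_B w_{j,B} ∑_{i ∈ B} m_{i,j}` plus the parity and flow-conservation
residuals of `(g, w)` weighted by `m` and `n`. At a feasible point the residuals vanish and both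
sums are weighted averages, bounded below by the minima of Problem-D1: this is weak duality. For
optimal LP multipliers, nonnegativity of the LP reduced costs is exactly the constraint of
Problem-D1 together with bounds on the check and normalization multipliers by those minima.
-/

open Finset Function

theorem mul_le_of_isLeast {ι W : Type*} [AddCommGroup W] [Module ℝ W] {A : (ι → ℝ) →ₗ[ℝ] W}
    {c : (ι → ℝ) →ₗ[ℝ] ℝ} {β : W} {P : ℝ} (hP : IsLeast (c '' {x | 0 ≤ x ∧ A x = β}) P)
    {x : ι → ℝ} {t : ℝ} (hx : 0 ≤ x) (ht : 0 ≤ t) (hA : A x = t • β) : t * P ≤ c x := by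
  obtain ⟨⟨x₀, ⟨hx₀, hAx₀⟩, rfl⟩, hmin⟩ := hP
  have := hmin ⟨(1 + t)⁻¹ • (x₀ + x), ⟨smul_nonneg (by positivity) (add_nonneg hx₀ hx), ?_⟩, rfl⟩
  · rw [map_smul, map_add, smul_eq_mul, le_inv_mul_iff₀ (by positivity)] at this
    linarith
  · rw [map_smul, map_add, hA, hAx₀]
    match_scalars
    field_simp

section LinearProgramming

variable {ι : Type*} [Fintype ι]

theorem exists_sub_smul_nonneg_support_ssubset {y z : ι → ℝ} (hy : 0 ≤ y)
    (hz : support z ⊆ support y) (hpos : ∃ i, 0 < z i) :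
    ∃ t : ℝ, 0 ≤ y - t • z ∧ support (y - t • z) ⊂ support y := by
  classical
  obtain ⟨i₀, hi₀, hmin⟩ := (univ.filter fun i => 0 < z i).exists_min_image (fun i => y i / z i)
    (by obtain ⟨i, hi⟩ := hpos; exact ⟨i, by simpa using hi⟩)
  simp only [mem_filter, mem_univ, true_and] at hi₀ hmin
  refine ⟨y i₀ / z i₀, fun i => ?_, ?_⟩
  · simp only [Pi.zero_apply, Pi.sub_apply, Pi.smul_apply, smul_eq_mul, sub_nonneg]
    rcases lt_or_ge 0 (z i) with h | h
    · exact (le_div_iff₀ h).1 (hmin i h)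
    · exact (mul_nonpos_of_nonneg_of_nonpos (div_nonneg (hy i₀) hi₀.le) h).trans (hy i)
  · have hsub : support (y - (y i₀ / z i₀) • z) ⊆ support y :=
      (support_sub _ _).trans
        (Set.union_subset subset_rfl ((support_smul_subset_right _ _).trans hz))
    refine (Set.ssubset_iff_of_subset hsub).2 ⟨i₀, hz hi₀.ne', ?_⟩
    simp [div_mul_cancel₀ _ hi₀.ne']

variable {F : Type*} [AddCommGroup F] [Module ℝ F]

theorem LinearMap.exists_nonneg_apply_eq_injective_on_support (T : (ι → ℝ) →ₗ[ℝ] F) {x : ι → ℝ}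
    (hx : 0 ≤ x) :
    ∃ y, 0 ≤ y ∧ T y = T x ∧ ∀ z, support z ⊆ support y → T z = 0 → z = 0 := by
  obtain ⟨y, ⟨hy, hTy⟩, hmin⟩ := (measure fun y : ι → ℝ => (support y).ncard).wf.has_min
    {y | 0 ≤ y ∧ T y = T x} ⟨x, hx, rfl⟩
  refine ⟨y, hy, hTy, fun z hz hTz => ?_⟩
  by_contra hz0
  obtain ⟨z', hz', hTz', hpos⟩ : ∃ z', support z' ⊆ support y ∧ T z' = 0 ∧ ∃ i, 0 < z' i := by
    obtain ⟨i, hi⟩ := Function.ne_iff.1 hz0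
    rcases lt_or_gt_of_ne hi with h | h
    · exact ⟨-z, by simpa using hz, by simp [hTz], i, by simpa using h⟩
    · exact ⟨z, hz, hTz, i, h⟩
  obtain ⟨t, ht, hlt⟩ := exists_sub_smul_nonneg_support_ssubset hy hz' hpos
  exact hmin _ ⟨ht, by simp [hTz', hTy]⟩ (Set.ncard_lt_ncard hlt)

variable [TopologicalSpace F] [IsTopologicalAddGroup F] [ContinuousSMul ℝ F] [T2Space F]

theorem LinearMap.isClosed_image_nonneg_of_injective_on_support (T : (ι → ℝ) →ₗ[ℝ] F) {s : Set ι}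
    (hT : ∀ z, support z ⊆ s → T z = 0 → z = 0) :
    IsClosed (T '' {z | 0 ≤ z ∧ support z ⊆ s}) := by
  let V : Submodule ℝ (ι → ℝ) := Submodule.pi sᶜ fun _ => ⊥
  have hV : ∀ z, z ∈ V ↔ support z ⊆ s := fun z => by
    rw [Function.support_subset_iff']
    simp [V, Submodule.mem_pi]
  have hker : LinearMap.ker (T.domRestrict V) = ⊥ :=
    (LinearMap.ker_eq_bot').2 fun v hv => Subtype.ext (hT v ((hV v).1 v.2) hv)
  have hclosed : IsClosed {v : V | 0 ≤ (v : ι → ℝ)} :=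
    isClosed_le continuous_const continuous_subtype_val
  convert (LinearMap.isClosedEmbedding_of_injective hker).isClosedMap _ hclosed using 1
  ext w
  constructor
  · rintro ⟨z, ⟨hz, hzs⟩, rfl⟩
    exact ⟨⟨z, (hV z).2 hzs⟩, hz, rfl⟩
  · rintro ⟨v, hv, rfl⟩
    exact ⟨v, ⟨hv, (hV v).1 v.2⟩, rfl⟩

theorem LinearMap.isClosed_image_nonneg (T : (ι → ℝ) →ₗ[ℝ] F) : IsClosed (T '' {z | 0 ≤ z}) := by
  have : T '' {z | 0 ≤ z} = ⋃ s ∈ {s : Set ι | ∀ z, support z ⊆ s → T z = 0 → z = 0},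
      T '' {z | 0 ≤ z ∧ support z ⊆ s} := by
    ext w
    simp only [Set.mem_image, Set.mem_iUnion, Set.mem_ofPred_eq, exists_prop]
    constructor
    · rintro ⟨x, hx, rfl⟩
      obtain ⟨y, hy, hTy, hker⟩ := T.exists_nonneg_apply_eq_injective_on_support hx
      exact ⟨support y, hker, y, ⟨hy, subset_rfl⟩, hTy⟩
    · rintro ⟨s, -, z, ⟨hz, -⟩, rfl⟩
      exact ⟨z, hz, rfl⟩
  rw [this]
  exact (Set.toFinite _).isClosed_biUnion fun s hs =>
    T.isClosed_image_nonneg_of_injective_on_support hs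

section Duality

variable {W : Type*} [NormedAddCommGroup W] [NormedSpace ℝ W] {A : (ι → ℝ) →ₗ[ℝ] W}
  {c : (ι → ℝ) →ₗ[ℝ] ℝ} {β : W} {P : ℝ}

theorem exists_separation_of_isLeast (hP : IsLeast (c '' {x | 0 ≤ x ∧ A x = β}) P) :
    ∃ f : ℝ × W →L[ℝ] ℝ, 0 < f (1, 0) ∧
      ∀ x, 0 ≤ x → ∀ t, 0 ≤ t → 0 ≤ f (c x - t * P, A x - t • β) := by
  let T : (Option ι → ℝ) →ₗ[ℝ] ℝ × W :=
    (c.prod A) ∘ₗ LinearMap.funLeft ℝ ℝ some - (LinearMap.proj none).smulRight (P, β)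
  have hT : ∀ t x, T (Option.elim' t x) = (c x - t * P, A x - t • β) := fun t x => rfl
  let C : ProperCone ℝ (ℝ × W) :=
    { toSubmodule := (PointedCone.positive ℝ (Option ι → ℝ)).map T
      isClosed' := T.isClosed_image_nonneg }
  have hb : ((-1 : ℝ), (0 : W)) ∉ C := by
    rintro ⟨y, hy, hTy⟩
    change T y = _ at hTy
    rw [← Option.elim'_none_some y, hT, Prod.mk.injEq, sub_eq_zero] at hTy
    linarith [mul_le_of_isLeast hP (x := y ∘ some) (fun i => hy (some i)) (hy none) hTy.2]
  obtain ⟨f, hfC, hfb⟩ := C.hyperplane_separation_point hb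
  refine ⟨f, ?_, fun x hx t ht => ?_⟩
  · rw [show ((-1 : ℝ), (0 : W)) = -((1 : ℝ), (0 : W)) by simp, map_neg] at hfb
    linarith
  · rw [← hT]
    exact hfC _ ⟨_, fun o => by cases o with | none => exact ht | some i => exact hx i, rfl⟩

theorem exists_dual_eq_of_isLeast (hP : IsLeast (c '' {x | 0 ≤ x ∧ A x = β}) P) :
    ∃ φ : W →L[ℝ] ℝ, (∀ x, 0 ≤ x → φ (A x) ≤ c x) ∧ φ β = P := by
  obtain ⟨f, ha, hf⟩ := exists_separation_of_isLeast hP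
  set φ : W →L[ℝ] ℝ := -(f (1, 0))⁻¹ • f.comp (ContinuousLinearMap.inr ℝ ℝ W)
  have hφ : ∀ x, 0 ≤ x → ∀ t, 0 ≤ t → φ (A x - t • β) ≤ c x - t * P := by
    intro x hx t ht
    have hsplit : (c x - t * P, A x - t • β)
        = (c x - t * P) • ((1 : ℝ), (0 : W)) + ((0 : ℝ), A x - t • β) := by simp
    have := hf x hx t ht
    rw [hsplit, map_add, map_smul, smul_eq_mul] at this
    simp only [φ, smul_apply, ContinuousLinearMap.comp_apply, ContinuousLinearMap.inr_apply,
      smul_eq_mul]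
    rw [neg_mul, neg_le, ← div_eq_inv_mul, le_div_iff₀ ha]
    linarith
  obtain ⟨x₀, ⟨hx₀, hAx₀⟩, rfl⟩ := hP.1
  refine ⟨φ, fun x hx => by simpa using hφ x hx 0 le_rfl, le_antisymm ?_ ?_⟩
  · simpa [hAx₀] using hφ x₀ hx₀ 0 le_rfl
  · simpa using hφ 0 le_rfl 1 zero_le_one

end Duality

end LinearProgramming

theorem Finset.inf'_le_sum_mul {ι : Type*} {t : Finset ι} (ht : t.Nonempty) (f w : ι → ℝ)
    (hw : ∀ i ∈ t, 0 ≤ w i) (hw1 : ∑ i ∈ t, w i = 1) : t.inf' ht f ≤ ∑ i ∈ t, w i * f i :=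
  calc t.inf' ht f = ∑ i ∈ t, w i * t.inf' ht f := by rw [← sum_mul, hw1, one_mul]
    _ ≤ ∑ i ∈ t, w i * f i :=
      sum_le_sum fun i hi => mul_le_mul_of_nonneg_left (inf'_le f hi) (hw i hi)

theorem nonneg_of_forall_nonneg_sum_mul {α : Type*} [Fintype α] [DecidableEq α] {r : α → ℝ}
    (h : ∀ z : α → ℝ, 0 ≤ z → 0 ≤ ∑ a, z a * r a) (a : α) : 0 ≤ r a := by
  simpa [Pi.single_apply] using h (Pi.single a 1) (Pi.single_nonneg.2 zero_le_one)

theorem sum_mul_sum_filter_eq {α β γ δ : Type*} [Fintype α] [Fintype β] [Fintype γ] [Fintype δ]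
    [DecidableEq γ] [DecidableEq δ] (φ : α → γ) (σ : β → δ) (g : α → β → ℝ) (n : γ → δ → ℝ) :
    ∑ t, ∑ k, n t k * ∑ i, ∑ e ∈ univ.filter (fun e => φ i = t ∧ σ e = k), g i e
      = ∑ i, ∑ e, g i e * n (φ i) (σ e) := by
  simp only [sum_filter, mul_sum]
  calc _ = ∑ t, ∑ i, ∑ e, ∑ k, n t k * if φ i = t ∧ σ e = k then g i e else 0 :=
        sum_congr rfl fun t _ => by rw [sum_comm]; exact sum_congr rfl fun i _ => sum_comm
    _ = _ := by
        rw [sum_comm]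
        refine sum_congr rfl fun i _ => ?_
        rw [sum_comm]
        refine sum_congr rfl fun e _ => ?_
        simp [ite_and, mul_comm]

section JointDecodingLP

variable {N M O : ℕ} {S : Type*}
  (Nb : Fin M → Finset (Fin N)) (x : Fin O → Bool) (s s' : Fin O → S) (b : Fin N → Fin O → ℝ)
  (p : Fin N)

def evenSubsets (j : Fin M) : Finset (Finset (Fin N)) :=
  (Nb j).powerset.filter fun B => Even B.card

theorem subset_of_mem_evenSubsets {j : Fin M} {B : Finset (Fin N)} (hB : B ∈ evenSubsets Nb j) :
    B ⊆ Nb j :=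
  mem_powerset.1 (mem_filter.1 hB).1

-- `Γ_{i,e} - n_{i-1,s(e)} + n_{i,s'(e)}` of the paper, with times counted from `0` here.
def reducedCost (mm : Fin N → Fin M → ℝ) (n : Fin (N + 1) → S → ℝ) (i : Fin N) (e : Fin O) : ℝ :=
  b i e - (if x e then ∑ j ∈ univ.filter (fun j => i ∈ Nb j), mm i j else 0)
    - n i.castSucc (s e) + n i.succ (s' e)

theorem reducedCost_nonneg_iff (mm : Fin N → Fin M → ℝ) (n : Fin (N + 1) → S → ℝ) (i : Fin N)
    (e : Fin O) :
    0 ≤ reducedCost Nb x s s' b mm n i e ↔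
      b i e - (if x e then ∑ j ∈ univ.filter (fun j => i ∈ Nb j), mm i j else 0)
        ≥ n i.castSucc (s e) - n i.succ (s' e) := by
  rw [reducedCost]
  constructor <;> intro h <;> linarith

def dualObjective (hO : 0 < O) (mm : Fin N → Fin M → ℝ) (n : Fin (N + 1) → S → ℝ) : ℝ :=
  ∑ j, (evenSubsets Nb j).inf' ⟨∅, by simp [evenSubsets]⟩ (fun B => ∑ i ∈ B, mm i j)
    + univ.inf' (univ_nonempty_iff.mpr (Fin.pos_iff_nonempty.mp hO))
        (reducedCost Nb x s s' b mm n p)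

def parityMultiplier (u : Fin M ⊕ Unit ⊕ (Fin N × Fin M) ⊕ (Fin (N + 1) × S) → ℝ) :
    Fin N → Fin M → ℝ :=
  fun i j => u (.inr (.inr (.inl (i, j))))

-- The boundary flow rows are `0 = 0`, so their multipliers are dropped: hence `n 0 = n N = 0`.
def flowPotential (u : Fin M ⊕ Unit ⊕ (Fin N × Fin M) ⊕ (Fin (N + 1) × S) → ℝ) :
    Fin (N + 1) → S → ℝ :=
  fun t k => if 0 < (t : ℕ) ∧ (t : ℕ) < N then u (.inr (.inr (.inr (t, k)))) else 0

def lagrangianCoeff (u : Fin M ⊕ Unit ⊕ (Fin N × Fin M) ⊕ (Fin (N + 1) × S) → ℝ) :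
    (Fin N × Fin O) ⊕ (Fin M × Finset (Fin N)) → ℝ :=
  Sum.elim
    (fun q => reducedCost Nb x s s' b (parityMultiplier u) (flowPotential u) q.1 q.2
      - if q.1 = p then u (.inr (.inl ())) else 0)
    fun q => if q.2 ∈ evenSubsets Nb q.1 then ∑ i ∈ q.2, parityMultiplier u i q.1 - u (.inl q.1)
      else 0

theorem sum_mul_lagrangianCoeff (u : Fin M ⊕ Unit ⊕ (Fin N × Fin M) ⊕ (Fin (N + 1) × S) → ℝ)
    (g : Fin N → Fin O → ℝ) (w : Fin M → Finset (Fin N) → ℝ) :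
    ∑ a, Sum.elim (uncurry g) (uncurry w) a * lagrangianCoeff Nb x s s' b p u a
      = ∑ i, ∑ e, g i e * reducedCost Nb x s s' b (parityMultiplier u) (flowPotential u) i e
          - (∑ e, g p e) * u (.inr (.inl ()))
        + (∑ j, ∑ B ∈ evenSubsets Nb j, w j B * ∑ i ∈ B, parityMultiplier u i j
          - ∑ j, (∑ B ∈ evenSubsets Nb j, w j B) * u (.inl j)) := by
  have hp : ∀ c : ℝ, ∑ i, ∑ e, (if i = p then g i e * c else 0) = ∑ e, g p e * c := fun c => by
    rw [sum_eq_single p (fun i _ hi => by simp [hi]) (by simp)]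
    simp
  simp only [Fintype.sum_sum_type, Fintype.sum_prod_type, lagrangianCoeff, Sum.elim_inl,
    Sum.elim_inr, uncurry_apply_pair, mul_sub, mul_ite, mul_zero, sum_sub_distrib, hp, sum_ite_mem,
    univ_inter, sum_mul]

variable [DecidableEq S]

-- The trellis nodes are `t : Fin (N + 1)`; the edges at time `i` go from `i.castSucc` to `i.succ`.
def inflow (g : Fin N → Fin O → ℝ) (t : Fin (N + 1)) (k : S) : ℝ :=
  ∑ i, ∑ e ∈ univ.filter fun e => i.succ = t ∧ s' e = k, g i e

def outflow (g : Fin N → Fin O → ℝ) (t : Fin (N + 1)) (k : S) : ℝ :=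
  ∑ i, ∑ e ∈ univ.filter fun e => i.castSucc = t ∧ s e = k, g i e

theorem inflow_succ (g : Fin N → Fin O → ℝ) (i : Fin N) (k : S) :
    inflow s' g i.succ k = ∑ e ∈ univ.filter fun e => s' e = k, g i e := by
  simp [inflow, Fin.succ_inj, Finset.sum_filter, ite_and]

theorem outflow_castSucc (g : Fin N → Fin O → ℝ) (i : Fin N) (k : S) :
    outflow s g i.castSucc k = ∑ e ∈ univ.filter fun e => s e = k, g i e := by
  simp [outflow, Fin.castSucc_inj, Finset.sum_filter, ite_and]

theorem forall_outflow_eq_inflow_iff (g : Fin N → Fin O → ℝ) :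
    (∀ (t : Fin (N + 1)) (k : S), 0 < (t : ℕ) → (t : ℕ) < N → outflow s g t k = inflow s' g t k) ↔
      ∀ (i : Fin N) (h : i.1 + 1 < N) (k : S),
        ∑ e ∈ univ.filter (fun e => s' e = k), g i e
          = ∑ e ∈ univ.filter (fun e => s e = k), g ⟨i.1 + 1, h⟩ e := by
  have hnode : ∀ (i : Fin N) (h : i.1 + 1 < N), i.succ = (⟨i.1 + 1, h⟩ : Fin N).castSucc :=
    fun i h => Fin.ext rfl
  constructor
  · intro hf i h k
    rw [← inflow_succ, ← outflow_castSucc, ← hnode]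
    exact (hf _ k (Nat.succ_pos _) h).symm
  · intro hf t k ht hN
    obtain ⟨i, rfl⟩ := Fin.exists_succ_eq_of_ne_zero (Fin.pos_iff_ne_zero.1 ht)
    rw [hnode i hN, outflow_castSucc, ← hnode, inflow_succ]
    exact (hf i hN k).symm

theorem sum_mul_outflow_sub_inflow [Fintype S] (g : Fin N → Fin O → ℝ) (n : Fin (N + 1) → S → ℝ) :
    ∑ t, ∑ k, n t k * (outflow s g t k - inflow s' g t k)
      = ∑ i, ∑ e, g i e * (n i.castSucc (s e) - n i.succ (s' e)) := by
  simp only [mul_sub, sum_sub_distrib, outflow, inflow, sum_mul_sum_filter_eq]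

def parityGap (g : Fin N → Fin O → ℝ) (w : Fin M → Finset (Fin N) → ℝ) (i : Fin N) (j : Fin M) :
    ℝ :=
  ∑ e ∈ univ.filter (fun e => x e = true), g i e
    - ∑ B ∈ (evenSubsets Nb j).filter (fun B => i ∈ B), w j B

theorem sum_ite_mul_sum_filter_mem (mm : Fin N → Fin M → ℝ) (w : Fin M → Finset (Fin N) → ℝ)
    (j : Fin M) :
    ∑ i, (if i ∈ Nb j then mm i j * ∑ B ∈ (evenSubsets Nb j).filter (fun B => i ∈ B), w j B
      else 0) = ∑ B ∈ evenSubsets Nb j, w j B * ∑ i ∈ B, mm i j := by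
  have hswap : ∀ i, (if i ∈ Nb j then mm i j * ∑ B ∈ (evenSubsets Nb j).filter (fun B => i ∈ B),
      w j B else 0) = ∑ B ∈ evenSubsets Nb j, if i ∈ B then w j B * mm i j else 0 := by
    intro i
    rw [← sum_filter, mul_sum]
    split_ifs with hi
    · exact sum_congr rfl fun B _ => mul_comm _ _
    · exact (sum_eq_zero fun B hB => absurd (subset_of_mem_evenSubsets Nb (mem_filter.1 hB).1
        (mem_filter.1 hB).2) hi).symm
  rw [sum_congr rfl fun i _ => hswap i, sum_comm]
  refine sum_congr rfl fun B _ => ?_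
  rw [sum_ite_mem, univ_inter, mul_sum]

theorem sum_mul_parityGap (mm : Fin N → Fin M → ℝ) (g : Fin N → Fin O → ℝ)
    (w : Fin M → Finset (Fin N) → ℝ) :
    ∑ i, ∑ j, mm i j * (if i ∈ Nb j then parityGap Nb x g w i j else 0)
      = ∑ i, ∑ e, g i e * (if x e then ∑ j ∈ univ.filter (fun j => i ∈ Nb j), mm i j else 0)
        - ∑ j, ∑ B ∈ evenSubsets Nb j, w j B * ∑ i ∈ B, mm i j := by
  have hedge : ∀ i,
      ∑ j, (if i ∈ Nb j then mm i j * ∑ e ∈ univ.filter (fun e => x e = true), g i e else 0)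
        = ∑ e, g i e * (if x e then ∑ j ∈ univ.filter (fun j => i ∈ Nb j), mm i j else 0) := by
    intro i
    simp_rw [mul_ite, mul_zero]
    rw [← sum_filter, ← sum_filter, ← sum_mul, ← sum_mul, mul_comm]
  have hsplit : ∀ i j, mm i j * (if i ∈ Nb j then parityGap Nb x g w i j else 0)
      = (if i ∈ Nb j then mm i j * ∑ e ∈ univ.filter (fun e => x e = true), g i e else 0)
        - if i ∈ Nb j then mm i j * ∑ B ∈ (evenSubsets Nb j).filter (fun B => i ∈ B), w j B
          else 0 := by
    intro i j
    split_ifs <;> simp [parityGap, mul_sub]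
  simp only [hsplit, sum_sub_distrib, hedge]
  rw [sum_comm (f := fun i j => if i ∈ Nb j then _ else 0)]
  simp only [sum_ite_mul_sum_filter_mem]

theorem sum_cost_eq_lagrangian [Fintype S] (mm : Fin N → Fin M → ℝ) (n : Fin (N + 1) → S → ℝ)
    (g : Fin N → Fin O → ℝ) (w : Fin M → Finset (Fin N) → ℝ) :
    ∑ i, ∑ e, b i e * g i e
      = ∑ i, ∑ e, g i e * reducedCost Nb x s s' b mm n i e
        + ∑ j, ∑ B ∈ evenSubsets Nb j, w j B * ∑ i ∈ B, mm i j
        + ∑ i, ∑ j, mm i j * (if i ∈ Nb j then parityGap Nb x g w i j else 0)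
        + ∑ t, ∑ k, n t k * (outflow s g t k - inflow s' g t k) := by
  have hsplit : ∀ i e, b i e * g i e = g i e * reducedCost Nb x s s' b mm n i e
      + g i e * (if x e then ∑ j ∈ univ.filter (fun j => i ∈ Nb j), mm i j else 0)
      + g i e * (n i.castSucc (s e) - n i.succ (s' e)) := by
    intro i e
    simp only [reducedCost]
    ring
  rw [sum_mul_parityGap, sum_mul_outflow_sub_inflow]
  simp only [hsplit, sum_add_distrib]
  ring

def IsPrimalFeasible (g : Fin N → Fin O → ℝ) (w : Fin M → Finset (Fin N) → ℝ) : Prop :=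
  (∀ i e, 0 ≤ g i e) ∧ (∀ j, ∀ B ∈ evenSubsets Nb j, 0 ≤ w j B) ∧
    (∀ j, ∑ B ∈ evenSubsets Nb j, w j B = 1) ∧ ∑ e, g p e = 1 ∧
    (∀ i j, i ∈ Nb j → ∑ B ∈ (evenSubsets Nb j).filter (fun B => i ∈ B), w j B
      = ∑ e ∈ univ.filter (fun e => x e = true), g i e) ∧
    ∀ (t : Fin (N + 1)) (k : S), 0 < (t : ℕ) → (t : ℕ) < N → outflow s g t k = inflow s' g t k

theorem dualObjective_le_cost [Fintype S] (hO : 0 < O) {g : Fin N → Fin O → ℝ}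
    {w : Fin M → Finset (Fin N) → ℝ} (hfeas : IsPrimalFeasible Nb x s s' p g w)
    {mm : Fin N → Fin M → ℝ} {n : Fin (N + 1) → S → ℝ} (h0 : ∀ k, n 0 k = 0)
    (hN : ∀ k, n (Fin.last N) k = 0)
    (hred : ∀ i, i ≠ p → ∀ e, 0 ≤ reducedCost Nb x s s' b mm n i e) :
    dualObjective Nb x s s' b p hO mm n ≤ ∑ i, ∑ e, b i e * g i e := by
  obtain ⟨hg, hw, hwsum, hgp, hpar, hflow⟩ := hfeas
  have hparity : ∑ i, ∑ j, mm i j * (if i ∈ Nb j then parityGap Nb x g w i j else 0) = 0 :=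
    sum_eq_zero fun i _ => sum_eq_zero fun j _ => by
      split_ifs with h
      · rw [parityGap, hpar i j h, sub_self, mul_zero]
      · rw [mul_zero]
  have hconservation : ∑ t, ∑ k, n t k * (outflow s g t k - inflow s' g t k) = 0 :=
    sum_eq_zero fun t _ => sum_eq_zero fun k _ => by
      by_cases ht : 0 < (t : ℕ) ∧ (t : ℕ) < N
      · rw [hflow t k ht.1 ht.2, sub_self, mul_zero]
      · obtain rfl | rfl : t = 0 ∨ t = Fin.last N := by
          simp only [Fin.ext_iff, Fin.val_zero, Fin.val_last]
          omega
        · rw [h0, zero_mul]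
        · rw [hN, zero_mul]
  have hedge : univ.inf' (univ_nonempty_iff.mpr (Fin.pos_iff_nonempty.mp hO))
        (reducedCost Nb x s s' b mm n p)
      ≤ ∑ i, ∑ e, g i e * reducedCost Nb x s s' b mm n i e :=
    calc _ ≤ ∑ e, g p e * reducedCost Nb x s s' b mm n p e :=
          inf'_le_sum_mul _ _ _ (fun e _ => hg p e) hgp
      _ ≤ _ := by
          simpa using sum_le_sum_of_subset_of_nonneg (subset_univ {p}) fun i _ hi =>
            sum_nonneg fun e _ => mul_nonneg (hg i e) (hred i (by simpa using hi) e)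
  rw [sum_cost_eq_lagrangian Nb x s s' b mm n g w, hparity, hconservation, add_zero, add_zero,
    add_comm, dualObjective]
  exact add_le_add (sum_le_sum fun j _ => inf'_le_sum_mul _ _ _ (hw j) (hwsum j)) hedge

-- Problem-P in standard form, with rows for the checks `j`, the normalization at `p`, the parity
-- constraints `(i, j)` and flow conservation at `(t, k)`; rows that Problem-P leaves free
-- (`i ∉ N(j)`, boundary nodes `t`) read `0 = 0`. Variables `(j, B)` with `B ∉ E_j` occur in no
-- row and cost nothing.
def constraintResidual (g : Fin N → Fin O → ℝ) (w : Fin M → Finset (Fin N) → ℝ) :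
    Fin M ⊕ Unit ⊕ (Fin N × Fin M) ⊕ (Fin (N + 1) × S) → ℝ :=
  Sum.elim (fun j => ∑ B ∈ evenSubsets Nb j, w j B) <|
  Sum.elim (fun _ => ∑ e, g p e) <|
  Sum.elim (fun q => if q.1 ∈ Nb q.2 then parityGap Nb x g w q.1 q.2 else 0)
    fun q => if 0 < (q.1 : ℕ) ∧ (q.1 : ℕ) < N then outflow s g q.1 q.2 - inflow s' g q.1 q.2 else 0

def constraintTarget : Fin M ⊕ Unit ⊕ (Fin N × Fin M) ⊕ (Fin (N + 1) × S) → ℝ :=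
  Sum.elim 1 (Sum.elim 1 0)

theorem constraintResidual_eq_constraintTarget_iff (g : Fin N → Fin O → ℝ)
    (w : Fin M → Finset (Fin N) → ℝ) :
    constraintResidual Nb x s s' p g w = constraintTarget ↔
      (∀ j, ∑ B ∈ evenSubsets Nb j, w j B = 1) ∧ ∑ e, g p e = 1 ∧
      (∀ i j, i ∈ Nb j → ∑ B ∈ (evenSubsets Nb j).filter (fun B => i ∈ B), w j B
        = ∑ e ∈ univ.filter (fun e => x e = true), g i e) ∧
      ∀ (t : Fin (N + 1)) (k : S), 0 < (t : ℕ) → (t : ℕ) < N →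
        outflow s g t k = inflow s' g t k := by
  simp only [funext_iff, Sum.forall, Prod.forall, constraintResidual, constraintTarget,
    Sum.elim_inl, Sum.elim_inr, Pi.one_apply, Pi.zero_apply, ite_eq_right_iff, parityGap,
    sub_eq_zero, and_imp, forall_const]
  simp only [eq_comm (a := ∑ e ∈ univ.filter (fun e => x e = true), _)]

def constraintMap :
    ((Fin N × Fin O) ⊕ (Fin M × Finset (Fin N)) → ℝ) →ₗ[ℝ]
      (Fin M ⊕ Unit ⊕ (Fin N × Fin M) ⊕ (Fin (N + 1) × S) → ℝ) where
  toFun z := constraintResidual Nb x s s' p (curry (z ∘ Sum.inl)) (curry (z ∘ Sum.inr))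
  map_add' z z' := by
    funext k
    rcases k with j | _ | ⟨i, j⟩ | ⟨t, k⟩ <;>
      simp only [constraintResidual, curry_apply, comp_apply, Pi.add_apply, sum_add_distrib,
        parityGap, outflow, inflow, Sum.elim_inl, Sum.elim_inr] <;> split_ifs <;> ring
  map_smul' c z := by
    funext k
    rcases k with j | _ | ⟨i, j⟩ | ⟨t, k⟩ <;>
      simp only [constraintResidual, curry_apply, comp_apply, Pi.smul_apply, smul_eq_mul,
        parityGap, outflow, inflow, Sum.elim_inl, Sum.elim_inr, Real.ringHom_apply, mul_sum,
        mul_ite, mul_zero] <;> split_ifs <;> simp [mul_sub, mul_sum]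

def costMap : ((Fin N × Fin O) ⊕ (Fin M × Finset (Fin N)) → ℝ) →ₗ[ℝ] ℝ where
  toFun z := ∑ i, ∑ e, b i e * z (.inl (i, e))
  map_add' z z' := by simp [mul_add, sum_add_distrib]
  map_smul' c z := by simp [mul_sum, mul_left_comm]

theorem isLeast_costMap_image {P : ℝ}
    (hP : IsLeast {y | ∃ g w, IsPrimalFeasible Nb x s s' p g w ∧ y = ∑ i, ∑ e, b i e * g i e} P) :
    IsLeast (costMap b '' {z | 0 ≤ z ∧ constraintMap Nb x s s' p z = constraintTarget}) P := by
  obtain ⟨⟨g, w, ⟨hg, hw, hwsum, hgp, hpar, hflow⟩, rfl⟩, hmin⟩ := hP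
  refine ⟨⟨Sum.elim (uncurry g) fun q => if q.2 ∈ evenSubsets Nb q.1 then w q.1 q.2 else 0,
    ⟨?_, ?_⟩, rfl⟩, ?_⟩
  · rintro (⟨i, e⟩ | ⟨j, B⟩)
    · exact hg i e
    · dsimp only [Pi.zero_apply, Sum.elim_inr]
      split_ifs with hB
      exacts [hw j B hB, le_rfl]
  · have hw' : ∀ j, ∀ B ∈ evenSubsets Nb j,
        (if B ∈ evenSubsets Nb j then w j B else 0) = w j B := fun j B hB => if_pos hB
    refine (constraintResidual_eq_constraintTarget_iff Nb x s s' p _ _).2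
      ⟨fun j => ?_, hgp, fun i j hij => ?_, hflow⟩
    · exact (sum_congr rfl (hw' j)).trans (hwsum j)
    · exact (sum_congr rfl fun B hB => hw' j B (mem_filter.1 hB).1).trans (hpar i j hij)
  · rintro _ ⟨z, ⟨hz, hAz⟩, rfl⟩
    obtain ⟨hwsum, hgp, hpar, hflow⟩ :=
      (constraintResidual_eq_constraintTarget_iff Nb x s s' p _ _).1 hAz
    exact hmin ⟨curry (z ∘ Sum.inl), curry (z ∘ Sum.inr),
      ⟨fun i e => hz _, fun j B _ => hz _, hwsum, hgp, hpar, hflow⟩, rfl⟩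

theorem sum_constraintResidual_mul [Fintype S]
    (u : Fin M ⊕ Unit ⊕ (Fin N × Fin M) ⊕ (Fin (N + 1) × S) → ℝ) (g : Fin N → Fin O → ℝ)
    (w : Fin M → Finset (Fin N) → ℝ) :
    ∑ k, constraintResidual Nb x s s' p g w k * u k
      = ∑ j, (∑ B ∈ evenSubsets Nb j, w j B) * u (.inl j) + (∑ e, g p e) * u (.inr (.inl ()))
        + ∑ i, ∑ j, parityMultiplier u i j * (if i ∈ Nb j then parityGap Nb x g w i j else 0)
        + ∑ t, ∑ k, flowPotential u t k * (outflow s g t k - inflow s' g t k) := by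
  have hflow : ∀ (t : Fin (N + 1)) (k : S),
      (if 0 < (t : ℕ) ∧ (t : ℕ) < N then outflow s g t k - inflow s' g t k else 0)
        * u (.inr (.inr (.inr (t, k))))
          = flowPotential u t k * (outflow s g t k - inflow s' g t k) := by
    intro t k
    simp only [flowPotential]
    split_ifs <;> ring
  simp only [Fintype.sum_sum_type, Fintype.sum_prod_type, constraintResidual, Sum.elim_inl,
    Sum.elim_inr, hflow, mul_comm (ite _ _ _), Fintype.sum_unique, add_assoc]
  rfl

theorem costMap_sub_sum_constraintMap_mul [Fintype S]
    (u : Fin M ⊕ Unit ⊕ (Fin N × Fin M) ⊕ (Fin (N + 1) × S) → ℝ)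
    (z : (Fin N × Fin O) ⊕ (Fin M × Finset (Fin N)) → ℝ) :
    costMap b z - ∑ k, constraintMap Nb x s s' p z k * u k
      = ∑ a, z a * lagrangianCoeff Nb x s s' b p u a := by
  obtain ⟨g, w, rfl⟩ : ∃ g w, z = Sum.elim (uncurry g) (uncurry w) :=
    ⟨curry (z ∘ Sum.inl), curry (z ∘ Sum.inr), by simp⟩
  rw [show costMap b (Sum.elim (uncurry g) (uncurry w)) = ∑ i, ∑ e, b i e * g i e from rfl,
    show constraintMap Nb x s s' p (Sum.elim (uncurry g) (uncurry w))
      = constraintResidual Nb x s s' p g w from rfl, sum_constraintResidual_mul,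
    sum_mul_lagrangianCoeff,
    sum_cost_eq_lagrangian Nb x s s' b (parityMultiplier u) (flowPotential u) g w]
  ring

theorem exists_feasible_dualObjective_ge [Fintype S] (hO : 0 < O)
    (φ : (Fin M ⊕ Unit ⊕ (Fin N × Fin M) ⊕ (Fin (N + 1) × S) → ℝ) →L[ℝ] ℝ)
    (hφ : ∀ z, 0 ≤ z → φ (constraintMap Nb x s s' p z) ≤ costMap b z) :
    ∃ mm n, (∀ k, n 0 k = 0) ∧ (∀ k, n (Fin.last N) k = 0) ∧
      (∀ i, i ≠ p → ∀ e, 0 ≤ reducedCost Nb x s s' b mm n i e) ∧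
      φ constraintTarget ≤ dualObjective Nb x s s' b p hO mm n := by
  set u : Fin M ⊕ Unit ⊕ (Fin N × Fin M) ⊕ (Fin (N + 1) × S) → ℝ :=
    fun k => φ fun k' => if k = k' then 1 else 0
  have hφu : ∀ v, φ v = ∑ k, v k * u k := fun v => by
    simpa [smul_eq_mul] using φ.toLinearMap.pi_apply_eq_sum_univ v
  have hr : ∀ a, 0 ≤ lagrangianCoeff Nb x s s' b p u a :=
    nonneg_of_forall_nonneg_sum_mul fun z hz => by
      rw [← costMap_sub_sum_constraintMap_mul, ← hφu]
      linarith [hφ z hz]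
  refine ⟨parityMultiplier u, flowPotential u, fun k => by simp [flowPotential],
    fun k => by simp [flowPotential],
    fun i hi e => by simpa [lagrangianCoeff, hi] using hr (.inl (i, e)), ?_⟩
  rw [hφu]
  simp only [constraintTarget, Fintype.sum_sum_type, Sum.elim_inl, Sum.elim_inr, Pi.one_apply,
    Pi.zero_apply, one_mul, zero_mul, sum_const_zero, add_zero, Fintype.sum_unique]
  exact add_le_add
    (sum_le_sum fun j _ => le_inf' _ _ fun B hB => by
      simpa [lagrangianCoeff, hB] using hr (.inr (j, B)))
    (le_inf' _ _ fun e _ => by simpa [lagrangianCoeff] using hr (.inl (p, e)))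

end JointDecodingLP

/-- Strong duality for the joint LP decoding problem (Problem-P vs Problem-D1). -/
theorem joint_LP_strong_duality
    (N M O : ℕ) (hO : 0 < O) (S : Type) [Fintype S] [DecidableEq S]
    (Nb : Fin M → Finset (Fin N))          -- neighborhood N(j) of check j
    (x : Fin O → Bool)                      -- input label of each trellis edge
    (s s' : Fin O → S)                      -- initial / final state of each edge
    (b : Fin N → Fin O → ℝ)                 -- branch metrics
    (p : Fin N)                             -- time of the single normalization
    (P : ℝ)
    (hprimal : IsLeast
      {y : ℝ | ∃ g : Fin N → Fin O → ℝ, ∃ w : Fin M → Finset (Fin N) → ℝ,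
        (∀ i e, 0 ≤ g i e) ∧
        (∀ j, ∀ B ∈ (Nb j).powerset.filter (fun B => Even B.card), 0 ≤ w j B) ∧
        (∀ j, ∑ B ∈ (Nb j).powerset.filter (fun B => Even B.card), w j B = 1) ∧
        (∑ e, g p e = 1) ∧
        (∀ i : Fin N, ∀ j : Fin M, i ∈ Nb j →
          ∑ B ∈ ((Nb j).powerset.filter (fun B => Even B.card)).filter
              (fun B => i ∈ B), w j B
            = ∑ e ∈ Finset.univ.filter (fun e => x e = true), g i e) ∧
        (∀ i : Fin N, ∀ h : i.1 + 1 < N, ∀ k : S,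
          ∑ e ∈ Finset.univ.filter (fun e => s' e = k), g i e
            = ∑ e ∈ Finset.univ.filter (fun e => s e = k), g ⟨i.1 + 1, h⟩ e) ∧
        y = ∑ i, ∑ e, b i e * g i e} P) :
    IsGreatest
      {y : ℝ | ∃ mm : Fin N → Fin M → ℝ, ∃ n : Fin (N + 1) → S → ℝ,
        (∀ k, n 0 k = 0) ∧ (∀ k, n (Fin.last N) k = 0) ∧
        (∀ i : Fin N, i ≠ p → ∀ e : Fin O,
          b i e - (if x e then ∑ j ∈ Finset.univ.filter (fun j => i ∈ Nb j), mm i j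
                    else 0)
            ≥ n i.castSucc (s e) - n i.succ (s' e)) ∧
        y = (∑ j, ((Nb j).powerset.filter (fun B => Even B.card)).inf'
              ⟨∅, by simp⟩ (fun B => ∑ i ∈ B, mm i j))
          + Finset.univ.inf'
              (Finset.univ_nonempty_iff.mpr (Fin.pos_iff_nonempty.mp hO))
              (fun e => b p e
                - (if x e then ∑ j ∈ Finset.univ.filter (fun j => p ∈ Nb j), mm p j
                    else 0)
                - n p.castSucc (s e) + n p.succ (s' e))} P := by
  have hP : IsLeast
      {y | ∃ g w, IsPrimalFeasible Nb x s s' p g w ∧ y = ∑ i, ∑ e, b i e * g i e} P := by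
    convert hprimal using 5 with y g w
    simp only [IsPrimalFeasible, forall_outflow_eq_inflow_iff, and_assoc, evenSubsets]
  obtain ⟨φ, hφ, hφP⟩ := exists_dual_eq_of_isLeast (isLeast_costMap_image Nb x s s' b p hP)
  obtain ⟨mm, n, h0, hN, hred, hle⟩ := exists_feasible_dualObjective_ge Nb x s s' b p hO φ hφ
  have hweak : ∀ mm n, (∀ k, n 0 k = 0) → (∀ k, n (Fin.last N) k = 0) →
      (∀ i, i ≠ p → ∀ e, 0 ≤ reducedCost Nb x s s' b mm n i e) →
      dualObjective Nb x s s' b p hO mm n ≤ P := by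
    obtain ⟨⟨g, w, hfeas, rfl⟩, -⟩ := hP
    exact fun mm n h0 hN hred => dualObjective_le_cost Nb x s s' b p hO hfeas h0 hN hred
  refine ⟨⟨mm, n, h0, hN,
    fun i hi e => (reducedCost_nonneg_iff Nb x s s' b mm n i e).1 (hred i hi e),
    (le_antisymm (hweak mm n h0 hN hred) (hφP ▸ hle)).symm⟩, ?_⟩
  rintro y ⟨mm, n, h0, hN, hc, rfl⟩
  exact hweak mm n h0 hN fun i hi e => (reducedCost_nonneg_iff Nb x s s' b mm n i e).2 (hc i hi e)
end
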